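/- Let C be an associative conformal algebra containing a conformal unit e₀, let I be a nilpotent ideal of C, and suppose ē₁, …, ē_N ∈ C/I satisfy ēᵢ∘₀ēᵢ = ēᵢ, {ēᵢ∘₀ē₀} = ēᵢ (where ē₀ = e₀ + I), and ēᵢ∘ₙēⱼ = 0 for all i ≠ j and all n ∈ ℕ. Then there exist e₁, …, e_N ∈ C such that eᵢ + I = ēᵢ, {eᵢ∘₀e₀} = eᵢ, eᵢ∘₀eᵢ = eᵢ, and eᵢ∘₀eⱼ = 0 for i ≠ j. -/

import Mathlib

section Abstract

/-- An (abstract) conformal algebra over `k`: a left `H = k[D]`-module with `k`-bilinear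
`n`-th products satisfying locality and sesquilinearity (the action of `D` is the action of
the polynomial variable `X`; terms with index `-1` read as `0`, which is achieved below by
the vanishing scalar `(0 : k)` at `n = 0`). -/
class ConformalAlgebra (k : Type) [Field k] (C : Type) [AddCommGroup C] [Module k C]
    [Module (Polynomial k) C] [IsScalarTower k (Polynomial k) C] where
  omul : ℕ → C → C → C
  omul_add_left : ∀ (n : ℕ) (a b c : C), omul n (a + b) c = omul n a c + omul n b c
  omul_add_right : ∀ (n : ℕ) (a b c : C), omul n a (b + c) = omul n a b + omul n a c
  omul_smul_left : ∀ (n : ℕ) (r : k) (a b : C), omul n (r • a) b = r • omul n a b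
  omul_smul_right : ∀ (n : ℕ) (r : k) (a b : C), omul n a (r • b) = r • omul n a b
  locality : ∀ a b : C, ∃ N : ℕ, ∀ n ≥ N, omul n a b = 0
  sesq_left : ∀ (n : ℕ) (a b : C),
    omul n ((Polynomial.X : Polynomial k) • a) b = -((n : k) • omul (n - 1) a b)
  sesq_right : ∀ (n : ℕ) (a b : C),
    omul n a ((Polynomial.X : Polynomial k) • b)
      = (Polynomial.X : Polynomial k) • omul n a b + (n : k) • omul (n - 1) a b

variable (k : Type) [Field k]
variable (C : Type) [AddCommGroup C] [Module k C] [Module (Polynomial k) C]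
  [IsScalarTower k (Polynomial k) C] [ConformalAlgebra k C]

/-- Abbreviation for the `n`-th product of a conformal algebra. -/
noncomputable abbrev om (n : ℕ) (a b : C) : C := ConformalAlgebra.omul (k := k) n a b

/-- The conformal algebra `C` is associative:
`(a ∘ₙ b) ∘ₘ c = ∑_{s=0}^{n} (-1)^s C(n,s) a ∘_{n-s} (b ∘_{m+s} c)`. -/
def ConformalAssoc : Prop :=
  ∀ (n m : ℕ) (a b c : C),
    om k C m (om k C n a b) c
      = ∑ s ∈ Finset.range (n + 1),
          (((-1 : k) ^ s) * (n.choose s : k)) • om k C (n - s) a (om k C (m + s) b c)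

/-- `{a ∘ₙ b} = ∑_{s ≥ 0} ((-1)^{n+s}/s!) Dˢ (a ∘_{n+s} b)` (a finite sum by locality;
`Dˢ x = Xˢ • x`). -/
noncomputable def obrace (n : ℕ) (a b : C) : C :=
  ∑ᶠ s : ℕ, (((-1 : k) ^ (n + s)) * ((s.factorial : k))⁻¹) •
    (((Polynomial.X : Polynomial k) ^ s) • om k C (n + s) a b)

/-- The `k`-span `A ∘_ω B` of all products `a ∘ₙ b`, `a ∈ A`, `b ∈ B`, `n ∈ ℕ`. -/
def omegaMulAbs (A B : Set C) : Set C :=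
  (Submodule.span k {y | ∃ a ∈ A, ∃ b ∈ B, ∃ n : ℕ, y = om k C n a b} : Submodule k C)

/-- Powers `I⁽¹⁾ = I`, `I⁽ᵐ⁺¹⁾ = I⁽ᵐ⁾ ∘_ω I`. -/
def idealPowAbs (I : Set C) : ℕ → Set C
  | 0 => I
  | m + 1 => omegaMulAbs k C (idealPowAbs I m) I

/-- The sequence of powers of `I` is eventually zero. -/
def IsNilpotentAbs (I : Set C) : Prop :=
  ∃ m : ℕ, ∀ m' ≥ m, idealPowAbs k C I m' ⊆ {0}

/-- `I` is an ideal of the conformal algebra `C`: an `H`-submodule with `a ∘ₙ b ∈ I` and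
`b ∘ₙ a ∈ I` for all `a ∈ C`, `b ∈ I`, `n ∈ ℕ`. -/
structure IsConfIdeal (I : Set C) : Prop where
  zero_mem : (0 : C) ∈ I
  add_mem : ∀ a ∈ I, ∀ b ∈ I, a + b ∈ I
  smul_mem : ∀ (p : Polynomial k), ∀ a ∈ I, p • a ∈ I
  omul_mem_left : ∀ (a : C), ∀ b ∈ I, ∀ n : ℕ, om k C n a b ∈ I
  omul_mem_right : ∀ (a : C), ∀ b ∈ I, ∀ n : ℕ, om k C n b a ∈ I

/-- `e` is an idempotent: `e ∘ₙ e = δ_{n,0} e`. -/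
def IsConfIdempotent (e : C) : Prop :=
  ∀ n : ℕ, om k C n e e = if n = 0 then e else 0

/-- `e` is a conformal unit: an idempotent with `e ∘₀ x = x` for all `x`. -/
def IsConfUnit (e : C) : Prop :=
  IsConfIdempotent k C e ∧ ∀ x : C, om k C 0 e x = x

/-- An ideal `P ≠ C` is prime if `A ∘_ω B ⊆ P` implies `A ⊆ P` or `B ⊆ P` for ideals `A, B`. -/
def IsPrimeConfIdeal (P : Set C) : Prop :=
  IsConfIdeal k C P ∧ P ≠ Set.univ ∧
    ∀ A B : Set C, IsConfIdeal k C A → IsConfIdeal k C B →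
      omegaMulAbs k C A B ⊆ P → A ⊆ P ∨ B ⊆ P

end Abstract

/-!
On `C` the `0`-th product is associative, and `T a := {a ∘₀ e₀}` is a `k`-linear projection
(it commutes with `D` and fixes every `a ∘ₛ e₀`) with `T (a ∘₀ b) = a ∘₀ T b`. Hence its fixed
space `S` is closed under `∘₀`, and `T xᵢ ∈ S` still represents `ēᵢ`. The rest happens in the
associative algebra `(S, ∘₀)` modulo the nilpotent ideal `I`: the idempotents are lifted one at a
time, first making the next representative `y` orthogonal to the sum `f` of those already lifted
(`y ↦ y - fy - yf + fyf`), then iterating `a ↦ 3a² - 2a³`, which preserves orthogonality to `f`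
and turns the defect `u = a² - a` into `4u³ - 3u²`, so that the defect vanishes after as many
steps as the nilpotency index of `I`.
-/

section AssociativeBilinear

variable {k R : Type*} [CommRing k] [AddCommGroup R] [Module k R]

def idempotentStep (M : R →ₗ[k] R →ₗ[k] R) (a : R) : R :=
  (3 : k) • M a a - (2 : k) • M a (M a a)

def bilinPow (M : R →ₗ[k] R →ₗ[k] R) (J : Submodule k R) : ℕ → Submodule k R
  | 0 => J
  | t + 1 => Submodule.map₂ M (bilinPow M J t) J

variable {M : R →ₗ[k] R →ₗ[k] R} {J : Submodule k R}

theorem idempotentStep_defect (hassoc : ∀ a b c, M (M a b) c = M a (M b c)) (a : R) :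
    M (idempotentStep M a) (idempotentStep M a) - idempotentStep M a
      = (4 : k) • M (M a a - a) (M (M a a - a) (M a a - a))
        - (3 : k) • M (M a a - a) (M a a - a) := by
  simp only [idempotentStep, map_sub, map_smul, LinearMap.sub_apply, LinearMap.smul_apply, hassoc]
  module

theorem idempotentStep_sub (hassoc : ∀ a b c, M (M a b) c = M a (M b c)) (a : R) :
    idempotentStep M a - a = (M a a - a) - (2 : k) • M (M a a - a) a := by
  simp only [idempotentStep, map_sub, LinearMap.sub_apply, hassoc]
  module

theorem mul_idempotentStep_eq_zero (hassoc : ∀ a b c, M (M a b) c = M a (M b c)) {f a : R}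
    (h : M f a = 0) : M f (idempotentStep M a) = 0 := by
  simp only [idempotentStep, map_sub, map_smul, ← hassoc, h, map_zero, LinearMap.zero_apply,
    smul_zero, sub_zero]

theorem idempotentStep_mul_eq_zero (hassoc : ∀ a b c, M (M a b) c = M a (M b c)) {f a : R}
    (h : M a f = 0) : M (idempotentStep M a) f = 0 := by
  simp only [idempotentStep, map_sub, map_smul, LinearMap.sub_apply, LinearMap.smul_apply, hassoc,
    h, map_zero, smul_zero, sub_zero]

theorem idempotentStep_mem {S : Submodule k R} (hS : ∀ a ∈ S, ∀ b ∈ S, M a b ∈ S) {a : R}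
    (ha : a ∈ S) : idempotentStep M a ∈ S :=
  sub_mem (S.smul_mem _ (hS _ ha _ ha)) (S.smul_mem _ (hS _ ha _ (hS _ ha _ ha)))

theorem bilinPow_antitone (hJl : ∀ a, ∀ b ∈ J, M a b ∈ J) : Antitone (bilinPow M J) := by
  refine antitone_nat_of_succ_le fun t => ?_
  induction t with
  | zero => exact Submodule.map₂_le.mpr fun a _ b hb => hJl a b hb
  | succ t ih => exact Submodule.map₂_le_map₂_left ih

theorem mul_mem_bilinPow (hassoc : ∀ a b c, M (M a b) c = M a (M b c)) {s t : ℕ} {a b : R}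
    (ha : a ∈ bilinPow M J s) (hb : b ∈ bilinPow M J t) : M a b ∈ bilinPow M J (s + t + 1) := by
  induction t generalizing b with
  | zero => exact Submodule.apply_mem_map₂ M ha hb
  | succ t ih =>
    have : Submodule.map₂ M (bilinPow M J t) J ≤ (bilinPow M J (s + t + 1 + 1)).comap (M a) :=
      Submodule.map₂_le.mpr fun c hc d hd => by
        rw [Submodule.mem_comap, ← hassoc]
        exact Submodule.apply_mem_map₂ M (ih hc) hd
    exact this hb

theorem idempotentStep_iterate_defect_mem (hassoc : ∀ a b c, M (M a b) c = M a (M b c))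
    (hJl : ∀ a, ∀ b ∈ J, M a b ∈ J) {a : R} (ha : M a a - a ∈ J) (r : ℕ) :
    M ((idempotentStep M)^[r] a) ((idempotentStep M)^[r] a) - (idempotentStep M)^[r] a
      ∈ bilinPow M J r := by
  induction r with
  | zero => exact ha
  | succ r ih =>
    rw [Function.iterate_succ_apply', idempotentStep_defect hassoc]
    have hsq := mul_mem_bilinPow hassoc ih ih
    have hcube := mul_mem_bilinPow hassoc ih hsq
    refine sub_mem (Submodule.smul_mem _ _ ?_) (Submodule.smul_mem _ _ ?_)
    · exact bilinPow_antitone hJl (by omega) hcube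
    · exact bilinPow_antitone hJl (by omega) hsq

theorem idempotentStep_iterate_sub_mem (hassoc : ∀ a b c, M (M a b) c = M a (M b c))
    (hJl : ∀ a, ∀ b ∈ J, M a b ∈ J) (hJr : ∀ a, ∀ b ∈ J, M b a ∈ J)
    {a : R} (ha : M a a - a ∈ J) (r : ℕ) : (idempotentStep M)^[r] a - a ∈ J := by
  induction r with
  | zero => simp
  | succ r ih =>
    have hdef : _ ∈ J := bilinPow_antitone hJl (Nat.zero_le r)
      (idempotentStep_iterate_defect_mem hassoc hJl ha r)
    rw [Function.iterate_succ_apply', ← sub_add_sub_cancel _ ((idempotentStep M)^[r] a),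
      idempotentStep_sub hassoc]
    exact add_mem (sub_mem hdef (J.smul_mem _ (hJr _ _ hdef))) ih

theorem mul_sub_mul_mem (hJl : ∀ a, ∀ b ∈ J, M a b ∈ J) (hJr : ∀ a, ∀ b ∈ J, M b a ∈ J)
    {a a' b b' : R} (ha : a' - a ∈ J) (hb : b' - b ∈ J) : M a' b' - M a b ∈ J := by
  have : M a' b' - M a b = M (a' - a) b' + M a (b' - b) := by
    simp only [map_sub, LinearMap.sub_apply]; abel
  rw [this]
  exact add_mem (hJr _ _ ha) (hJl _ _ hb)

theorem mul_mem_of_sub_mem (hJl : ∀ a, ∀ b ∈ J, M a b ∈ J) (hJr : ∀ a, ∀ b ∈ J, M b a ∈ J)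
    {a a' b b' : R} (hab : M a b ∈ J) (ha : a' - a ∈ J) (hb : b' - b ∈ J) : M a' b' ∈ J := by
  simpa using add_mem (mul_sub_mul_mem hJl hJr ha hb) hab

theorem mul_self_sub_mem_of_sub_mem (hJl : ∀ a, ∀ b ∈ J, M a b ∈ J)
    (hJr : ∀ a, ∀ b ∈ J, M b a ∈ J) {a a' : R} (ha : M a a - a ∈ J) (h : a' - a ∈ J) :
    M a' a' - a' ∈ J := by
  have : M a' a' - a' = (M a' a' - M a a) + (M a a - a) - (a' - a) := by abel
  rw [this]
  exact sub_mem (add_mem (mul_sub_mul_mem hJl hJr h h) ha) h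

theorem exists_idempotent_sub_mem_of_bilinPow_eq_bot (hassoc : ∀ a b c, M (M a b) c = M a (M b c))
    (hJl : ∀ a, ∀ b ∈ J, M a b ∈ J) (hJr : ∀ a, ∀ b ∈ J, M b a ∈ J) {m : ℕ}
    (hnil : bilinPow M J m = ⊥) {S : Submodule k R} (hS : ∀ a ∈ S, ∀ b ∈ S, M a b ∈ S)
    {a f : R} (haS : a ∈ S) (ha : M a a - a ∈ J) (hfa : M f a = 0) (haf : M a f = 0) :
    ∃ e ∈ S, e - a ∈ J ∧ M e e = e ∧ M f e = 0 ∧ M e f = 0 := by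
  refine ⟨(idempotentStep M)^[m] a, ?_, idempotentStep_iterate_sub_mem hassoc hJl hJr ha m, ?_,
    ?_, ?_⟩
  · exact Set.MapsTo.iterate (fun _ hb => idempotentStep_mem hS hb) m haS
  · simpa [hnil, sub_eq_zero] using idempotentStep_iterate_defect_mem hassoc hJl ha m
  · exact Set.MapsTo.iterate (f := idempotentStep M) (s := {b | M f b = 0})
      (fun _ hb => mul_idempotentStep_eq_zero hassoc hb) m hfa
  · exact Set.MapsTo.iterate (f := idempotentStep M) (s := {b | M b f = 0})
      (fun _ hb => idempotentStep_mul_eq_zero hassoc hb) m haf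

theorem exists_sub_mem_orthogonal (hassoc : ∀ a b c, M (M a b) c = M a (M b c))
    (hJl : ∀ a, ∀ b ∈ J, M a b ∈ J) {S : Submodule k R} (hS : ∀ a ∈ S, ∀ b ∈ S, M a b ∈ S)
    {f y : R} (hff : M f f = f) (hfS : f ∈ S) (hyS : y ∈ S) (hfy : M f y ∈ J)
    (hyf : M y f ∈ J) : ∃ b ∈ S, b - y ∈ J ∧ M f b = 0 ∧ M b f = 0 := by
  refine ⟨y - M f y - M y f + M f (M y f), ?_, ?_, ?_, ?_⟩
  · exact add_mem (sub_mem (sub_mem hyS (hS _ hfS _ hyS)) (hS _ hyS _ hfS))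
      (hS _ hfS _ (hS _ hyS _ hfS))
  · have : y - M f y - M y f + M f (M y f) - y = M f (M y f) - M f y - M y f := by abel
    rw [this]
    exact sub_mem (sub_mem (hJl _ _ hyf) hfy) hyf
  · simp only [map_sub, map_add, ← hassoc, hff]
    abel
  · simp only [map_sub, map_add, LinearMap.sub_apply, LinearMap.add_apply, hassoc, hff]
    abel

theorem exists_idempotent_sub_mem_orthogonal (hassoc : ∀ a b c, M (M a b) c = M a (M b c))
    (hJl : ∀ a, ∀ b ∈ J, M a b ∈ J) (hJr : ∀ a, ∀ b ∈ J, M b a ∈ J) {m : ℕ}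
    (hnil : bilinPow M J m = ⊥) {S : Submodule k R} (hS : ∀ a ∈ S, ∀ b ∈ S, M a b ∈ S)
    {f y : R} (hff : M f f = f) (hfS : f ∈ S) (hyS : y ∈ S) (hy : M y y - y ∈ J)
    (hfy : M f y ∈ J) (hyf : M y f ∈ J) :
    ∃ e ∈ S, e - y ∈ J ∧ M e e = e ∧ M f e = 0 ∧ M e f = 0 := by
  obtain ⟨b, hbS, hby, hfb, hbf⟩ := exists_sub_mem_orthogonal hassoc hJl hS hff hfS hyS hfy hyf
  obtain ⟨e, heS, heb, he⟩ := exists_idempotent_sub_mem_of_bilinPow_eq_bot hassoc hJl hJr hnil hS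
    hbS (mul_self_sub_mem_of_sub_mem hJl hJr hy hby) hfb hbf
  exact ⟨e, heS, by simpa using add_mem heb hby, he⟩

theorem mul_sum_of_orthogonal {n : ℕ} {e : Fin n → R} (hidem : ∀ i, M (e i) (e i) = e i)
    (horth : ∀ i j, i ≠ j → M (e i) (e j) = 0) (i : Fin n) : M (e i) (∑ j, e j) = e i := by
  rw [map_sum, Finset.sum_eq_single i (fun j _ hj => horth i j hj.symm) (by simp), hidem]

theorem sum_mul_of_orthogonal {n : ℕ} {e : Fin n → R} (hidem : ∀ i, M (e i) (e i) = e i)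
    (horth : ∀ i j, i ≠ j → M (e i) (e j) = 0) (i : Fin n) : M (∑ j, e j) (e i) = e i := by
  rw [map_sum, LinearMap.sum_apply,
    Finset.sum_eq_single i (fun j _ hj => horth j i hj) (by simp), hidem]

theorem exists_orthogonal_idempotents_sub_mem (hassoc : ∀ a b c, M (M a b) c = M a (M b c))
    (hJl : ∀ a, ∀ b ∈ J, M a b ∈ J) (hJr : ∀ a, ∀ b ∈ J, M b a ∈ J) {m : ℕ}
    (hnil : bilinPow M J m = ⊥) {S : Submodule k R} (hS : ∀ a ∈ S, ∀ b ∈ S, M a b ∈ S) :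
    ∀ {N : ℕ} (y : Fin N → R), (∀ i, y i ∈ S) → (∀ i, M (y i) (y i) - y i ∈ J) →
      (∀ i j, i ≠ j → M (y i) (y j) ∈ J) →
      ∃ e : Fin N → R, (∀ i, e i ∈ S) ∧ (∀ i, e i - y i ∈ J) ∧
        (∀ i, M (e i) (e i) = e i) ∧ (∀ i j, i ≠ j → M (e i) (e j) = 0)
  | 0, y, _, _, _ => ⟨y, finZeroElim, finZeroElim, finZeroElim, finZeroElim⟩
  | N + 1, y, hyS, hy, hyy => by
    obtain ⟨e, heS, hey, hidem, horth⟩ := exists_orthogonal_idempotents_sub_mem hassoc hJl hJr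
      hnil hS (fun i => y i.castSucc) (fun i => hyS _) (fun i => hy _)
      fun i j hij => hyy _ _ (Fin.castSucc_injective _ |>.ne hij)
    set f := ∑ i, e i
    have hfS : f ∈ S := Submodule.sum_mem _ fun i _ => heS i
    have hff : M f f = f := by
      conv_lhs => rw [map_sum]
      exact Finset.sum_congr rfl fun i _ => sum_mul_of_orthogonal hidem horth i
    have hfy : M f (y (Fin.last N)) ∈ J := by
      rw [map_sum, LinearMap.sum_apply]
      exact Submodule.sum_mem _ fun i _ => mul_mem_of_sub_mem hJl hJr
        (hyy _ _ (Fin.castSucc_lt_last i).ne) (hey i) (by simp)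
    have hyf : M (y (Fin.last N)) f ∈ J := by
      rw [map_sum]
      exact Submodule.sum_mem _ fun i _ => mul_mem_of_sub_mem hJl hJr
        (hyy _ _ (Fin.castSucc_lt_last i).ne') (by simp) (hey i)
    obtain ⟨el, helS, hely, helel, hfel, helf⟩ := exists_idempotent_sub_mem_orthogonal hassoc hJl
      hJr hnil hS hff hfS (hyS _) (hy _) hfy hyf
    have hel : ∀ i, M (e i) el = 0 := fun i => by
      rw [← mul_sum_of_orthogonal hidem horth i, hassoc, hfel, map_zero]
    have hle : ∀ i, M el (e i) = 0 := fun i => by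
      rw [← sum_mul_of_orthogonal hidem horth i, ← hassoc, helf, map_zero, LinearMap.zero_apply]
    refine ⟨Fin.snoc e el, ?_, ?_, ?_, ?_⟩ <;>
      simp only [Fin.forall_fin_succ', Fin.snoc_castSucc, Fin.snoc_last, ne_eq]
    · exact ⟨heS, helS⟩
    · exact ⟨hey, hely⟩
    · exact ⟨hidem, helel⟩
    · simpa [Fin.castSucc_ne_last, (Fin.castSucc_ne_last _).symm, hel, hle] using horth

end AssociativeBilinear

section Conformal

variable {k : Type} [Field k] {C : Type} [AddCommGroup C] [Module k C] [Module (Polynomial k) C]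
  [IsScalarTower k (Polynomial k) C] [ConformalAlgebra k C]

local notation "D" => (Polynomial.X : Polynomial k)

variable (k C) in
noncomputable def omBilin (n : ℕ) : C →ₗ[k] C →ₗ[k] C :=
  LinearMap.mk₂ k (om k C n) (ConformalAlgebra.omul_add_left n)
    (ConformalAlgebra.omul_smul_left n) (ConformalAlgebra.omul_add_right n)
    (ConformalAlgebra.omul_smul_right n)

variable (k) in
theorem om_locality (a b : C) : ∃ N, ∀ n ≥ N, om k C n a b = 0 :=
  ConformalAlgebra.locality a b

theorem om_zero_right (n : ℕ) (a : C) : om k C n a 0 = 0 := (omBilin k C n a).map_zero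

theorem om_add_left (n : ℕ) (a a' b : C) : om k C n (a + a') b = om k C n a b + om k C n a' b :=
  ConformalAlgebra.omul_add_left n a a' b

theorem om_sum_right {ι : Type*} (n : ℕ) (a : C) (s : Finset ι) (b : ι → C) :
    om k C n a (∑ i ∈ s, b i) = ∑ i ∈ s, om k C n a (b i) :=
  map_sum (omBilin k C n a) b s

theorem om_smul_right (n : ℕ) (r : k) (a b : C) : om k C n a (r • b) = r • om k C n a b :=
  ConformalAlgebra.omul_smul_right n r a b

theorem om_smul_left (n : ℕ) (r : k) (a b : C) : om k C n (r • a) b = r • om k C n a b :=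
  ConformalAlgebra.omul_smul_left n r a b

theorem om_om_zero (hassoc : ConformalAssoc k C) (s : ℕ) (a b c : C) :
    om k C s (om k C 0 a b) c = om k C 0 a (om k C s b c) := by
  simpa using hassoc 0 s a b c

theorem om_om_unit (hassoc : ConformalAssoc k C) {e₀ : C} (he₀ : IsConfUnit k C e₀)
    (s t : ℕ) (a : C) :
    om k C t (om k C s a e₀) e₀ = if t = 0 then om k C s a e₀ else 0 := by
  have hunit : ∀ n, om k C n e₀ e₀ = if n = 0 then e₀ else 0 := he₀.1
  rw [hassoc s t a e₀ e₀, Finset.sum_eq_single 0]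
  · split_ifs with ht <;> simp [hunit, ht, om_zero_right]
  · intro r _ hr
    simp [hunit, hr, om_zero_right]
  · simp

theorem om_zero_X_pow_smul_left {s : ℕ} (hs : s ≠ 0) (a b : C) :
    om k C 0 ((D ^ s) • a) b = 0 := by
  obtain ⟨t, rfl⟩ := Nat.exists_eq_succ_of_ne_zero hs
  simpa [pow_succ', mul_smul] using ConformalAlgebra.sesq_left (k := k) 0 (D ^ t • a) b

theorem om_zero_X_pow_smul_right (s : ℕ) (a b : C) :
    om k C 0 a ((D ^ s) • b) = (D ^ s) • om k C 0 a b := by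
  induction s with
  | zero => simp
  | succ s ih =>
    simpa [pow_succ', mul_smul, ih] using ConformalAlgebra.sesq_right (k := k) 0 a (D ^ s • b)

theorem obrace_zero_eq_sum {a b : C} {N : ℕ} (h : ∀ s ≥ N, om k C s a b = 0) :
    obrace k C 0 a b
      = ∑ s ∈ Finset.range N, ((-1 : k) ^ s * (s.factorial : k)⁻¹) • (D ^ s • om k C s a b) := by
  rw [obrace]
  simp only [zero_add]
  refine finsum_eq_sum_of_support_subset _ fun s hs => ?_
  by_contra hsN
  exact hs (by simp [h s (by simpa using hsN)])

variable (k) in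
noncomputable def braceRight (b : C) : C →ₗ[k] C where
  toFun a := obrace k C 0 a b
  map_add' a a' := by
    obtain ⟨N, hN⟩ := om_locality k a b
    obtain ⟨N', hN'⟩ := om_locality k a' b
    have ha : ∀ s ≥ max N N', om k C s a b = 0 := fun s hs => hN s (le_of_max_le_left hs)
    have ha' : ∀ s ≥ max N N', om k C s a' b = 0 := fun s hs => hN' s (le_of_max_le_right hs)
    have haa' : ∀ s ≥ max N N', om k C s (a + a') b = 0 := fun s hs => by
      rw [om_add_left, ha s hs, ha' s hs, add_zero]
    simp only [obrace_zero_eq_sum ha, obrace_zero_eq_sum ha', obrace_zero_eq_sum haa',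
      ← Finset.sum_add_distrib, om_add_left, smul_add]
  map_smul' r a := by
    obtain ⟨N, hN⟩ := om_locality k a b
    have hra : ∀ s ≥ N, om k C s (r • a) b = 0 := fun s hs => by
      rw [om_smul_left, hN s hs, smul_zero]
    simp only [obrace_zero_eq_sum hN, obrace_zero_eq_sum hra, Finset.smul_sum, om_smul_left,
      RingHom.id_apply, smul_comm _ r, smul_smul, mul_comm r]

theorem braceRight_apply (a b : C) : braceRight k b a = obrace k C 0 a b := rfl

theorem om_succ_X_smul_left (n : ℕ) (a b : C) :
    om k C (n + 1) (D • a) b = -(((n : k) + 1) • om k C n a b) := by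
  simpa using ConformalAlgebra.sesq_left (k := k) (n + 1) a b

theorem braceRight_X_smul [CharZero k] (a b : C) :
    braceRight k b (D • a) = D • braceRight k b a := by
  obtain ⟨N, hN⟩ := om_locality k a b
  have hXa : ∀ s ≥ N + 1, om k C s (D • a) b = 0 := fun s hs => by
    obtain ⟨t, rfl⟩ := Nat.exists_eq_add_of_le' (le_of_add_le_right hs)
    rw [om_succ_X_smul_left, hN t (by omega), smul_zero, neg_zero]
  rw [braceRight_apply, braceRight_apply, obrace_zero_eq_sum hXa, obrace_zero_eq_sum hN,
    Finset.sum_range_succ', Finset.smul_sum,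
    show om k C 0 (D • a) b = 0 by simpa using om_zero_X_pow_smul_left one_ne_zero a b,
    smul_zero, smul_zero, add_zero]
  refine Finset.sum_congr rfl fun s _ => ?_
  rw [om_succ_X_smul_left, smul_neg, smul_comm _ ((s : k) + 1), ← neg_smul, smul_smul,
    smul_comm D, ← mul_smul, ← pow_succ']
  congr 1
  rw [Nat.factorial_succ]
  push_cast
  field_simp
  ring

theorem braceRight_X_pow_smul [CharZero k] (s : ℕ) (a b : C) :
    braceRight k b (D ^ s • a) = D ^ s • braceRight k b a := by
  induction s with
  | zero => simp
  | succ s ih => rw [pow_succ', mul_smul, braceRight_X_smul, ih, ← mul_smul]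

theorem braceRight_om_unit (hassoc : ConformalAssoc k C) {e₀ : C} (he₀ : IsConfUnit k C e₀)
    (s : ℕ) (a : C) : braceRight k e₀ (om k C s a e₀) = om k C s a e₀ := by
  have h : ∀ t ≥ 1, om k C t (om k C s a e₀) e₀ = 0 := fun t ht => by
    rw [om_om_unit hassoc he₀, if_neg (by omega)]
  rw [braceRight_apply, obrace_zero_eq_sum h, Finset.sum_range_one, om_om_unit hassoc he₀,
    if_pos rfl]
  simp

theorem braceRight_braceRight [CharZero k] (hassoc : ConformalAssoc k C) {e₀ : C}
    (he₀ : IsConfUnit k C e₀) (a : C) :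
    braceRight k e₀ (braceRight k e₀ a) = braceRight k e₀ a := by
  obtain ⟨N, hN⟩ := om_locality k a e₀
  rw [braceRight_apply a, obrace_zero_eq_sum hN, map_sum]
  refine Finset.sum_congr rfl fun s _ => ?_
  rw [map_smul, braceRight_X_pow_smul, braceRight_om_unit hassoc he₀]

theorem braceRight_om_zero (hassoc : ConformalAssoc k C) (a b c : C) :
    braceRight k c (om k C 0 a b) = om k C 0 a (braceRight k c b) := by
  obtain ⟨N, hN⟩ := om_locality k b c
  have hab : ∀ s ≥ N, om k C s (om k C 0 a b) c = 0 := fun s hs => by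
    rw [om_om_zero hassoc, hN s hs, om_zero_right]
  rw [braceRight_apply, braceRight_apply, obrace_zero_eq_sum hab, obrace_zero_eq_sum hN,
    om_sum_right]
  refine Finset.sum_congr rfl fun s _ => ?_
  rw [om_smul_right, om_zero_X_pow_smul_right, om_om_zero hassoc]

variable {I : Set C}

def IsConfIdeal.toSubmodule (hI : IsConfIdeal k C I) : Submodule k C where
  carrier := I
  zero_mem' := hI.zero_mem
  add_mem' := fun ha hb => hI.add_mem _ ha _ hb
  smul_mem' r a ha := algebraMap_smul (Polynomial k) r a ▸ hI.smul_mem _ a ha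

theorem IsConfIdeal.bilinPow_le_idealPowAbs (hI : IsConfIdeal k C I) (t : ℕ) :
    (bilinPow (omBilin k C 0) hI.toSubmodule t : Set C) ⊆ idealPowAbs k C I t := by
  induction t with
  | zero => exact subset_rfl
  | succ t ih =>
    exact Submodule.map₂_le.mpr (fun a ha b hb => Submodule.subset_span ⟨a, ih ha, b, hb, 0, rfl⟩)

theorem IsConfIdeal.exists_bilinPow_eq_bot (hI : IsConfIdeal k C I) (hnil : IsNilpotentAbs k C I) :
    ∃ m, bilinPow (omBilin k C 0) hI.toSubmodule m = ⊥ := by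
  obtain ⟨m, hm⟩ := hnil
  exact ⟨m, (Submodule.eq_bot_iff _).mpr fun a ha => hm m le_rfl (hI.bilinPow_le_idealPowAbs m ha)⟩

end Conformal

theorem stmt5_general (k : Type) [Field k] [CharZero k]
    (C : Type) [AddCommGroup C] [Module k C] [Module (Polynomial k) C]
    [IsScalarTower k (Polynomial k) C] [ConformalAlgebra k C]
    (hassoc : ConformalAssoc k C)
    (e₀ : C) (he₀ : IsConfUnit k C e₀)
    (I : Set C) (hI : IsConfIdeal k C I) (hInil : IsNilpotentAbs k C I)
    (N : ℕ) (x : Fin N → C)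
    (hidem : ∀ i, om k C 0 (x i) (x i) - x i ∈ I)
    (hbrace : ∀ i, obrace k C 0 (x i) e₀ - x i ∈ I)
    (horth : ∀ i j, i ≠ j → ∀ n : ℕ, om k C n (x i) (x j) ∈ I) :
    ∃ e : Fin N → C,
      (∀ i, e i - x i ∈ I) ∧
      (∀ i, obrace k C 0 (e i) e₀ = e i) ∧
      (∀ i, om k C 0 (e i) (e i) = e i) ∧
      (∀ i j, i ≠ j → om k C 0 (e i) (e j) = 0) := by
  obtain ⟨m, hnil⟩ := hI.exists_bilinPow_eq_bot hInil
  have hJl : ∀ a, ∀ b ∈ hI.toSubmodule, om k C 0 a b ∈ hI.toSubmodule :=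
    fun a b hb => hI.omul_mem_left a b hb 0
  have hJr : ∀ a, ∀ b ∈ hI.toSubmodule, om k C 0 b a ∈ hI.toSubmodule :=
    fun a b hb => hI.omul_mem_right a b hb 0
  have hTx : ∀ i, braceRight k e₀ (x i) - x i ∈ hI.toSubmodule := hbrace
  let S := LinearMap.eqLocus (braceRight k e₀) LinearMap.id
  have hS : ∀ a ∈ S, ∀ b ∈ S, om k C 0 a b ∈ S := fun a _ b hb => by
    simp only [S, LinearMap.mem_eqLocus, LinearMap.id_apply] at hb ⊢
    rw [braceRight_om_zero hassoc, hb]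
  obtain ⟨e, heS, hex, he, heo⟩ := exists_orthogonal_idempotents_sub_mem (M := omBilin k C 0)
    (om_om_zero hassoc 0) hJl hJr hnil hS (fun i => braceRight k e₀ (x i))
    (fun i => braceRight_braceRight hassoc he₀ (x i))
    (fun i => mul_self_sub_mem_of_sub_mem hJl hJr (hidem i) (hTx i))
    (fun i j hij => mul_mem_of_sub_mem hJl hJr (horth i j hij 0) (hTx i) (hTx j))
  refine ⟨e, fun i => ?_, heS, he, heo⟩
  have := add_mem (hex i) (hTx i)
  rwa [sub_add_sub_cancel] at this

/-- Let `C` be an associative conformal algebra with a conformal unit `e₀`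
and `I` a nilpotent ideal. If `ē₁, …, ē_N ∈ C/I` (given by representatives `x i ∈ C`) satisfy
`ēᵢ ∘₀ ēᵢ = ēᵢ`, `{ēᵢ ∘₀ ē₀} = ēᵢ` and `ēᵢ ∘ₙ ēⱼ = 0` for `i ≠ j`, then there are
`e₁, …, e_N ∈ C` with `eᵢ + I = ēᵢ`, `{eᵢ ∘₀ e₀} = eᵢ`, `eᵢ ∘₀ eᵢ = eᵢ` and `eᵢ ∘₀ eⱼ = 0`
for `i ≠ j`. -/
theorem stmt5 (k : Type) [Field k] [IsAlgClosed k] [CharZero k]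
    (C : Type) [AddCommGroup C] [Module k C] [Module (Polynomial k) C]
    [IsScalarTower k (Polynomial k) C] [ConformalAlgebra k C]
    (hassoc : ConformalAssoc k C)
    (e₀ : C) (he₀ : IsConfUnit k C e₀)
    (I : Set C) (hI : IsConfIdeal k C I) (hInil : IsNilpotentAbs k C I)
    (N : ℕ) (x : Fin N → C)
    (hidem : ∀ i, om k C 0 (x i) (x i) - x i ∈ I)
    (hbrace : ∀ i, obrace k C 0 (x i) e₀ - x i ∈ I)
    (horth : ∀ i j, i ≠ j → ∀ n : ℕ, om k C n (x i) (x j) ∈ I) :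
    ∃ e : Fin N → C,
      (∀ i, e i - x i ∈ I) ∧
      (∀ i, obrace k C 0 (e i) e₀ = e i) ∧
      (∀ i, om k C 0 (e i) (e i) = e i) ∧
      (∀ i j, i ≠ j → om k C 0 (e i) (e j) = 0) :=
  stmt5_general k C hassoc e₀ he₀ I hI hInil N x hidem hbrace horth
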